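/- arXiv:2505.07515 — 5 statements merged into one kernel-verified Lean document; each statement's English description precedes it below -/
import Mathlib

section
/- Let d ≥ 2 be an integer, λ > 0, and q ∈ [0,1]. If λ < d^d/(d-1)^(d+1), then (d²q - 1)·λ·(1-q)^d < 1. -/
/-- AM–GM: `x * y^n ≤ ((x + n*y)/(n+1))^(n+1)` for nonneg reals. -/
lemma amgm_aux (n : ℕ) (x y : ℝ) (hx : 0 ≤ x) (hy : 0 ≤ y) :
    x * y ^ n ≤ ((x + n * y) / (n + 1)) ^ (n + 1) := by
  have hn1 : (0:ℝ) < (n:ℝ) + 1 := by positivity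
  have hw : (1 / ((n:ℝ)+1)) + (n:ℝ)/((n:ℝ)+1) = 1 := by field_simp; ring
  have h := Real.geom_mean_le_arith_mean2_weighted (by positivity)
    (by positivity) hx hy hw
  have lhs_nonneg : 0 ≤ x ^ ((1:ℝ)/((n:ℝ)+1)) * y ^ ((n:ℝ)/((n:ℝ)+1)) := by
    positivity
  have h2 := pow_le_pow_left₀ lhs_nonneg h (n+1)
  have key : (x ^ ((1:ℝ)/((n:ℝ)+1)) * y ^ ((n:ℝ)/((n:ℝ)+1))) ^ (n+1)
      = x * y ^ n := by
    rw [mul_pow, ← Real.rpow_natCast (x ^ _) (n+1), ← Real.rpow_natCast (y ^ _) (n+1),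
        ← Real.rpow_mul hx, ← Real.rpow_mul hy]
    have e1 : (1:ℝ)/((n:ℝ)+1) * ((n:ℝ)+1) = 1 := by field_simp
    have e2 : (n:ℝ)/((n:ℝ)+1) * ((n:ℝ)+1) = (n:ℝ) := by field_simp
    push_cast
    rw [e1, e2, Real.rpow_one, Real.rpow_natCast]
  calc x * y ^ n = _ := key.symm
    _ ≤ (1/((n:ℝ)+1) * x + (n:ℝ)/((n:ℝ)+1) * y) ^ (n+1) := h2
    _ = ((x + n * y) / (n + 1)) ^ (n + 1) := by ring_nf

/-- If `λ < d^d/(d-1)^(d+1)` then `(d²q - 1)·λ·(1-q)^d < 1` for all `q ∈ [0,1]`. -/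
theorem stmt3 (d : ℕ) (hd : 2 ≤ d) (lam q : ℝ) (hlam : 0 < lam)
    (hlt : lam < (d:ℝ)^d / ((d:ℝ) - 1)^(d+1)) (hq : q ∈ Set.Icc (0:ℝ) 1) :
    ((d:ℝ)^2 * q - 1) * lam * (1 - q)^d < 1 := by
  obtain ⟨hq0, hq1⟩ := hq
  set D : ℝ := (d:ℝ) with hD
  have hD2 : (2:ℝ) ≤ D := by rw [hD]; exact_mod_cast hd
  have hDpos : 0 < D := by linarith
  have hD1 : 0 < D - 1 := by linarith
  set C : ℝ := (D - 1)^(d+1) / D^d with hC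
  have hCpos : 0 < C := by rw [hC]; positivity
  have hA : (D^2 * q - 1) * (1 - q)^d ≤ C := by
    rcases le_or_gt (D^2 * q) 1 with hc | hc
    · have h1 : (D^2 * q - 1) * (1 - q)^d ≤ 0 :=
        mul_nonpos_of_nonpos_of_nonneg (by linarith) (pow_nonneg (by linarith) d)
      linarith
    · have hx : 0 ≤ D * q - 1/D := by
        rw [sub_nonneg, div_le_iff₀ hDpos]; nlinarith
      have h := amgm_aux d (D * q - 1/D) (1 - q) hx (by linarith)
      have hrw : ((D * q - 1/D) + (d:ℝ) * (1 - q)) / ((d:ℝ) + 1)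
          = (D - 1) / D := by
        rw [← hD]
        field_simp
        ring
      rw [hrw] at h
      have hfact : (D^2 * q - 1) * (1 - q)^d
          = D * ((D * q - 1/D) * (1 - q)^d) := by
        field_simp
      have hCeq : D * ((D - 1)/D)^(d+1) = C := by
        rw [hC, div_pow, pow_succ]
        field_simp
        ring
      rw [hfact, ← hCeq]
      exact mul_le_mul_of_nonneg_left h hDpos.le
  have step1 : (D^2 * q - 1) * lam * (1 - q)^d
      = ((D^2 * q - 1) * (1 - q)^d) * lam := by ring
  have step2 : ((D^2 * q - 1) * (1 - q)^d) * lam ≤ C * lam :=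
    mul_le_mul_of_nonneg_right hA hlam.le
  have step3 : C * lam < C * (D^d / (D - 1)^(d+1)) :=
    mul_lt_mul_of_pos_left hlt hCpos
  have step4 : C * (D^d / (D - 1)^(d+1)) = 1 := by
    rw [hC]; field_simp
  rw [step1]
  calc ((D^2*q-1)*(1-q)^d)*lam ≤ C * lam := step2
    _ < C * (D^d / (D-1)^(d+1)) := step3
    _ = 1 := step4
end

section
/- Let d ≥ 2, λ ∈ (0, d^d/(d-1)^{d+1}), and let x̂ ∈ (0,1/d) be the unique solution of x/(1-x)^{d+1} = λ. Then for all x ∈ [0,1], f(x) = (1+(d+1)λ(1-x)^d)/(1−(d²x−1)λ(1-x)^d) ≤ f(x̂) = 1/(1−d·x̂). -/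
lemma aux2 (d : ℕ) (t b : ℝ) (ht : 0 ≤ t) (hb : 0 ≤ b) :
    t^d * (((d:ℝ)+1) * b - d * t) ≤ b^(d+1) := by
  induction d with
  | zero => simp
  | succ n ih =>
    have h1 : t^(n+1) * (((n:ℝ)+1) * b - n * t) ≤ b^(n+1) * t := by
      have := mul_le_mul_of_nonneg_right ih ht
      calc t^(n+1) * (((n:ℝ)+1) * b - n * t)
          = t^n * (((n:ℝ)+1) * b - n * t) * t := by ring
        _ ≤ b^(n+1) * t := this
    have h2 : b * t^(n+1) + t * b^(n+1) ≤ b^(n+2) + t^(n+2) := by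
      have et : t * t^(n+1) = t^(n+2) := (pow_succ' t (n+1)).symm
      have eb : b * b^(n+1) = b^(n+2) := (pow_succ' b (n+1)).symm
      rcases le_total t b with h | h
      · have key : (0:ℝ) ≤ (b - t) * (b^(n+1) - t^(n+1)) :=
          mul_nonneg (by linarith) (by nlinarith [pow_le_pow_left₀ ht h (n+1)])
        nlinarith [key, et, eb]
      · have key : (0:ℝ) ≤ (t - b) * (t^(n+1) - b^(n+1)) :=
          mul_nonneg (by linarith) (by nlinarith [pow_le_pow_left₀ hb h (n+1)])
        nlinarith [key, et, eb]
    push_cast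
    nlinarith [h1, h2, (pow_succ' t (n+1)).symm, (pow_succ' b (n+1)).symm]

/-- For subcritical `λ`, the function
`f(x) = (1+(d+1)λ(1-x)^d)/(1−(d²x−1)λ(1-x)^d)` is maximized on `[0,1]` at the
fixed point `xh`, with `f(xh) = 1/(1−d·xh)`. -/
theorem stmt8 (d : ℕ) (hd : 2 ≤ d) (lam xh : ℝ) (hlam : 0 < lam)
    (hlt : lam < (d:ℝ)^d / ((d:ℝ) - 1)^(d+1))
    (hx : xh ∈ Set.Ioo (0:ℝ) (1/d)) (hfix : xh / (1 - xh)^(d+1) = lam) :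
    (∀ x ∈ Set.Icc (0:ℝ) 1,
      (1 + ((d:ℝ) + 1) * lam * (1 - x)^d) / (1 - ((d:ℝ)^2 * x - 1) * lam * (1 - x)^d) ≤
      (1 + ((d:ℝ) + 1) * lam * (1 - xh)^d) / (1 - ((d:ℝ)^2 * xh - 1) * lam * (1 - xh)^d)) ∧
    (1 + ((d:ℝ) + 1) * lam * (1 - xh)^d) / (1 - ((d:ℝ)^2 * xh - 1) * lam * (1 - xh)^d) =
      1 / (1 - d * xh) := by
  obtain ⟨hx0, hx1⟩ := hx
  have hd2 : (2:ℝ) ≤ (d:ℝ) := by exact_mod_cast hd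
  have hd0 : (0:ℝ) < (d:ℝ) := by linarith
  have hdx : (d:ℝ) * xh < 1 := by
    rw [one_div] at hx1
    calc (d:ℝ) * xh < (d:ℝ) * ((d:ℝ)⁻¹) := by
          exact mul_lt_mul_of_pos_left hx1 hd0
      _ = 1 := mul_inv_cancel₀ (ne_of_gt hd0)
  have hxh1 : xh < 1 := by nlinarith
  have hb : (0:ℝ) < 1 - xh := by linarith
  have hbd : (0:ℝ) < (1 - xh)^(d+1) := pow_pos hb _
  -- fixed point equation
  have hlamb : lam * (1 - xh)^(d+1) = xh := by
    field_simp at hfix; linarith [hfix]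
  have hlamb' : lam * (1 - xh)^d * (1 - xh) = xh := by
    rw [mul_assoc, ← pow_succ]; exact hlamb
  -- positivity of denominators etc.
  have hpos : (0:ℝ) < 1 - (d:ℝ) * xh := by linarith
  have hNxh : (0:ℝ) < 1 + ((d:ℝ) + 1) * lam * (1 - xh)^d := by positivity
  -- equality at xh : N(xh) * (1 - d xh) = D(xh)
  have hEq : (1 + ((d:ℝ) + 1) * lam * (1 - xh)^d) * (1 - (d:ℝ) * xh)
      = 1 - ((d:ℝ)^2 * xh - 1) * lam * (1 - xh)^d := by
    linear_combination (d:ℝ) * hlamb'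
  have hfval : (1 + ((d:ℝ) + 1) * lam * (1 - xh)^d) /
      (1 - ((d:ℝ)^2 * xh - 1) * lam * (1 - xh)^d) = 1 / (1 - d * xh) := by
    rw [← hEq, eq_div_iff (ne_of_gt hpos), div_mul_eq_mul_div,
      div_eq_iff (by positivity : (1 + ((d:ℝ) + 1) * lam * (1 - xh)^d) * (1 - (d:ℝ) * xh) ≠ 0)]
    ring
  refine ⟨?_, hfval⟩
  intro x hxI
  obtain ⟨hxl, hxr⟩ := hxI
  rw [hfval]
  have ht : (0:ℝ) ≤ 1 - x := by linarith
  -- key inequality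
  have hkey := aux2 d (1 - x) (1 - xh) ht hb.le
  have hkey2 : lam * ((1-x)^d * (((d:ℝ)+1) * (1-xh) - d * (1-x))) ≤ xh := by
    calc lam * ((1-x)^d * (((d:ℝ)+1) * (1-xh) - d * (1-x)))
        ≤ lam * (1 - xh)^(d+1) := mul_le_mul_of_nonneg_left hkey hlam.le
      _ = xh := hlamb
  -- deduce N(x)(1 - d xh) ≤ D(x)
  have hIneq : (1 + ((d:ℝ) + 1) * lam * (1 - x)^d) * (1 - (d:ℝ) * xh)
      ≤ 1 - ((d:ℝ)^2 * x - 1) * lam * (1 - x)^d := by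
    nlinarith [mul_le_mul_of_nonneg_left hkey2 hd0.le]
  have hNx : (1:ℝ) ≤ 1 + ((d:ℝ) + 1) * lam * (1 - x)^d := by
    have : (0:ℝ) ≤ ((d:ℝ) + 1) * lam * (1 - x)^d := by positivity
    linarith
  have hDx : (0:ℝ) < 1 - ((d:ℝ)^2 * x - 1) * lam * (1 - x)^d := by
    nlinarith [mul_le_mul_of_nonneg_right hNx hpos.le]
  rw [div_le_div_iff₀ hDx hpos]
  linarith [hIneq]
end

section
/- Let d ≥ 2 be an integer and Δ = d+1. For λ(δ) = (1-δ)·d^d/(d-1)^{d+1} with δ ∈ (0,1), let x̂(δ) ∈ (0,1/d) denote the unique solution of x/(1-x)^{d+1} = λ(δ). Then x̂(δ) ≤ (1/d)·(1 − (d-1)δ/(2d)). -/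
set_option maxHeartbeats 800000


/-- For `λ = (1-δ)·d^d/(d-1)^{d+1}` with `δ ∈ (0,1)`, the unique fixed point
`xh ∈ (0,1/d)` of `x/(1-x)^{d+1} = λ` satisfies `xh ≤ (1/d)(1 − (d-1)δ/(2d))`. -/
theorem stmt9 (d : ℕ) (hd : 2 ≤ d) (δ lam xh : ℝ) (hδ : δ ∈ Set.Ioo (0:ℝ) 1)
    (hlam : lam = (1 - δ) * ((d:ℝ)^d / ((d:ℝ) - 1)^(d+1)))
    (hx : xh ∈ Set.Ioo (0:ℝ) (1/d))
    (hfix : xh / (1 - xh)^(d+1) = lam) :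
    xh ≤ (1/d) * (1 - ((d:ℝ) - 1) * δ / (2 * d)) := by
  obtain ⟨hδ0, hδ1⟩ := hδ
  obtain ⟨hx0, hx1⟩ := hx
  have hD : (2:ℝ) ≤ (d:ℝ) := by exact_mod_cast hd
  set D : ℝ := (d:ℝ) with hDdef
  have hD0 : (0:ℝ) < D := by linarith
  set y : ℝ := (1/D) * (1 - (D-1)*δ/(2*D)) with hy
  set u : ℝ := δ/(2*D) with hu
  have hu0 : 0 < u := by positivity
  have hu1 : u < 1 := by
    rw [hu, div_lt_one (by linarith)]; linarith
  have hNcast : ((d+1 : ℕ) : ℝ) = D + 1 := by push_cast [hDdef]; ring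
  -- Bernoulli
  have hBern : 1 - (D+1)*u ≤ (1-u)^(d+1) := by
    have h := one_add_mul_le_pow (a := -u) (by linarith) (d+1)
    rw [hNcast] at h
    calc 1 - (D+1)*u = 1 + (D+1)*(-u) := by ring
      _ ≤ (1 + -u)^(d+1) := h
      _ = (1-u)^(d+1) := by ring_nf
  have hB0 : 0 < 1 - (D+1)*u := by
    rw [hu, sub_pos, ← mul_div_assoc, div_lt_one (by linarith)]
    nlinarith
  have hprod : (1+u)^(d+1)*(1-u)^(d+1) ≤ 1 := by
    have h1 : (1+u)*(1-u) = 1 - u^2 := by ring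
    rw [← mul_pow, h1]
    have hnn : (0:ℝ) ≤ 1 - u^2 := by nlinarith
    have hle : 1 - u^2 ≤ 1 := by nlinarith [sq_nonneg u]
    exact pow_le_one₀ hnn hle
  have hP0 : 0 < (1+u)^(d+1) := by positivity
  have hPB : (1+u)^(d+1) * (1 - (D+1)*u) ≤ 1 := by
    calc (1+u)^(d+1) * (1 - (D+1)*u) ≤ (1+u)^(d+1)*(1-u)^(d+1) :=
          mul_le_mul_of_nonneg_left hBern (le_of_lt hP0)
      _ ≤ 1 := hprod
  have hDy : D * y = 1 - (D-1)*δ/(2*D) := by rw [hy]; field_simp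
  have hA0 : 0 < D * y := by
    rw [hDy, sub_pos, div_lt_one (by linarith)]
    nlinarith
  -- key inequality : (1-δ)(1+u)^{d+1} ≤ D*y
  have hkey : (1-δ)*(1+u)^(d+1) ≤ D * y := by
    have hAB : (1-δ) ≤ (D*y) * (1 - (D+1)*u) := by
      rw [hDy, hu]
      have hAC : (D-1)*δ/(2*D) + (D+1)*(δ/(2*D)) = δ := by
        field_simp; ring
      have hA : (0:ℝ) ≤ (D-1)*δ/(2*D) := div_nonneg (mul_nonneg (by linarith) hδ0.le) (by linarith)
      have hC : (0:ℝ) ≤ (D+1)*(δ/(2*D)) := by positivity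
      nlinarith [mul_nonneg hA hC]
    nlinarith [mul_le_mul_of_nonneg_left hPB (le_of_lt hA0),
      mul_le_mul_of_nonneg_left hAB (le_of_lt hP0)]
  have hy0 : 0 < y := by nlinarith
  have hxh1 : xh < 1 := by
    have h12 : 1/D ≤ 1/2 := by
      rw [div_le_div_iff₀ hD0 (by norm_num)]; linarith
    linarith
  -- f(y) ≥ lam
  have h1y : 1 - y = (D-1)/D * (1+u) := by
    rw [hy, hu]; field_simp; ring
  have hy1 : 0 < 1 - y := by
    rw [h1y]; exact mul_pos (div_pos (by linarith) hD0) (by linarith)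
  have hpowD1 : 0 < (D-1)^(d+1) := pow_pos (by linarith) _
  have h1ypow : 0 < (1-y)^(d+1) := pow_pos hy1 _
  have hlhsEq : (1-δ)*D^d*(1-y)^(d+1) = (1-δ)*(1+u)^(d+1) * ((D-1)^(d+1)/D) := by
    rw [h1y, mul_pow, div_pow, pow_succ D d]
    field_simp
  have hfy : lam ≤ y/(1-y)^(d+1) := by
    have hl2 : lam = ((1-δ)*D^d)/(D-1)^(d+1) := by rw [hlam]; ring
    rw [hl2, div_le_div_iff₀ hpowD1 h1ypow]
    have h := mul_le_mul_of_nonneg_right hkey (le_of_lt (div_pos hpowD1 hD0))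
    have heq : D*y*((D-1)^(d+1)/D) = y*(D-1)^(d+1) := by
      field_simp
    calc (1-δ)*D^d*(1-y)^(d+1) = (1-δ)*(1+u)^(d+1) * ((D-1)^(d+1)/D) := hlhsEq
      _ ≤ D*y*((D-1)^(d+1)/D) := h
      _ = y*(D-1)^(d+1) := heq
  by_contra hcon
  push_neg at hcon
  have hxy : y < xh := hcon
  have hpow : (1-xh)^(d+1) < (1-y)^(d+1) :=
    pow_lt_pow_left₀ (by linarith) (by linarith) (Nat.succ_ne_zero d)
  have hxpow : 0 < (1-xh)^(d+1) := pow_pos (by linarith) _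
  have hmono : y/(1-y)^(d+1) < xh/(1-xh)^(d+1) := by
    rw [div_lt_div_iff₀ h1ypow hxpow]
    nlinarith [mul_lt_mul_of_pos_right hxy hxpow, mul_lt_mul_of_pos_left hpow hx0]
  linarith [hfy, hmono, hfix.ge, hfix.le]
end

section
/- Let d ≥ 2, λ < d^d/(d-1)^{d+1}, and suppose Φ* ≥ 1 is a real number satisfying Φ* ≤ 1 + d·(a(q)) where a(x) = λ(1-x)^d/(1+λ(1-x)^d) + d·x·(λ(1-x)^d/(1+λ(1-x)^d))·Φ* and q ∈ [0,1] maximizes a. Then Φ* ≤ (1+(d+1)λ(1-q)^d)/(1−(d²q−1)λ(1-q)^d). -/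
lemma amgm14 (n : ℕ) (a b : ℝ) (ha : 0 ≤ a) (hb : 0 ≤ b) :
    a * b ^ n ≤ ((a + n * b) / (n + 1)) ^ (n + 1) := by
  have h1 : (0:ℝ) < (n:ℝ) + 1 := by positivity
  have w1 : (0:ℝ) ≤ 1/((n:ℝ)+1) := by positivity
  have w2 : (0:ℝ) ≤ (n:ℝ)/((n:ℝ)+1) := by positivity
  have hsum : 1/((n:ℝ)+1) + (n:ℝ)/((n:ℝ)+1) = 1 := by field_simp; ring
  have hg := Real.geom_mean_le_arith_mean2_weighted w1 w2 ha hb hsum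
  have hle := pow_le_pow_left₀ (by positivity) hg (n+1)
  have lhs : (a ^ (1/((n:ℝ)+1)) * b ^ ((n:ℝ)/((n:ℝ)+1))) ^ (n+1) = a * b ^ n := by
    rw [← Real.rpow_natCast (a ^ (1/((n:ℝ)+1)) * b ^ ((n:ℝ)/((n:ℝ)+1))) (n+1),
      Real.mul_rpow (Real.rpow_nonneg ha _) (Real.rpow_nonneg hb _),
      ← Real.rpow_mul ha, ← Real.rpow_mul hb]
    have c1 : 1/((n:ℝ)+1) * ((n+1:ℕ):ℝ) = 1 := by
      push_cast; field_simp
    have c2 : (n:ℝ)/((n:ℝ)+1) * ((n+1:ℕ):ℝ) = (n:ℝ) := by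
      push_cast; field_simp
    rw [c1, c2, Real.rpow_one, Real.rpow_natCast]
  rw [lhs] at hle
  calc a * b ^ n ≤ (1/((n:ℝ)+1) * a + (n:ℝ)/((n:ℝ)+1) * b) ^ (n+1) := hle
    _ = ((a + n * b) / (n + 1)) ^ (n + 1) := by ring

/-- Solving the self-bounding inequality `Φ* ≤ 1 + d·a(q)` where
`a(x) = F(x) + d·x·F(x)·Φ*` with `F(x) = λ(1-x)^d/(1+λ(1-x)^d)` and `q`
maximizing `a` on `[0,1]`, gives `Φ* ≤ (1+(d+1)λ(1-q)^d)/(1−(d²q−1)λ(1-q)^d)`. -/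
theorem stmt14 (d : ℕ) (hd : 2 ≤ d) (lam : ℝ) (hlam : 0 < lam)
    (hlt : lam < (d:ℝ)^d / ((d:ℝ) - 1)^(d+1)) (Φ q : ℝ) (hΦ : 1 ≤ Φ)
    (hq : q ∈ Set.Icc (0:ℝ) 1)
    (hmax : ∀ x ∈ Set.Icc (0:ℝ) 1,
      lam * (1-x)^d / (1 + lam * (1-x)^d)
          + d * x * (lam * (1-x)^d / (1 + lam * (1-x)^d)) * Φ ≤
      lam * (1-q)^d / (1 + lam * (1-q)^d)
          + d * q * (lam * (1-q)^d / (1 + lam * (1-q)^d)) * Φ)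
    (hself : Φ ≤ 1 + d * (lam * (1-q)^d / (1 + lam * (1-q)^d)
          + d * q * (lam * (1-q)^d / (1 + lam * (1-q)^d)) * Φ)) :
    Φ ≤ (1 + ((d:ℝ) + 1) * lam * (1-q)^d) / (1 - ((d:ℝ)^2 * q - 1) * lam * (1-q)^d) := by
  obtain ⟨hq0, hq1⟩ := hq
  have h1q : (0:ℝ) ≤ 1 - q := by linarith
  set L : ℝ := lam * (1-q)^d with hLdef
  have hL : 0 ≤ L := by positivity
  have h1L : (0:ℝ) < 1 + L := by linarith
  have hd1 : (0:ℝ) < (d:ℝ) - 1 := by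
    have : (2:ℝ) ≤ (d:ℝ) := by exact_mod_cast hd
    linarith
  have key : ((d:ℝ)^2 * q - 1) * L < 1 := by
    by_cases hc : (d:ℝ)^2 * q ≤ 1
    · have : ((d:ℝ)^2*q - 1) * L ≤ 0 :=
        mul_nonpos_of_nonpos_of_nonneg (by linarith) hL
      linarith
    · push_neg at hc
      have ha : 0 ≤ (d:ℝ)^2*q - 1 := by linarith
      have hb : 0 ≤ (d:ℝ)*(1-q) := by positivity
      have h3 := amgm14 d ((d:ℝ)^2*q-1) ((d:ℝ)*(1-q)) ha hb
      have e1 : (((d:ℝ)^2*q-1) + d*((d:ℝ)*(1-q))) / ((d:ℝ)+1) = (d:ℝ)-1 := by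
        have hne : (d:ℝ)+1 ≠ 0 := by positivity
        field_simp
        ring
      rw [mul_pow, e1] at h3
      -- h3 : (d²q-1) * (d^d * (1-q)^d) ≤ (d-1)^(d+1)
      have hdd : (0:ℝ) < (d:ℝ)^d := by positivity
      have hdm : (0:ℝ) < ((d:ℝ)-1)^(d+1) := by positivity
      have hA : ((d:ℝ)^2*q-1) * (1-q)^d ≤ ((d:ℝ)-1)^(d+1) / (d:ℝ)^d := by
        rw [le_div_iff₀ hdd]
        nlinarith [h3]
      have hB : (0:ℝ) < ((d:ℝ)-1)^(d+1) / (d:ℝ)^d := by positivity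
      have step1 : lam * (((d:ℝ)^2*q-1) * (1-q)^d) ≤ lam * (((d:ℝ)-1)^(d+1) / (d:ℝ)^d) :=
        mul_le_mul_of_nonneg_left hA hlam.le
      have step2 : lam * (((d:ℝ)-1)^(d+1) / (d:ℝ)^d)
          < ((d:ℝ)^d / ((d:ℝ)-1)^(d+1)) * (((d:ℝ)-1)^(d+1) / (d:ℝ)^d) :=
        mul_lt_mul_of_pos_right hlt hB
      have step3 : ((d:ℝ)^d / ((d:ℝ)-1)^(d+1)) * (((d:ℝ)-1)^(d+1) / (d:ℝ)^d) = 1 := by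
        field_simp
      have : ((d:ℝ)^2 * q - 1) * L = lam * (((d:ℝ)^2*q-1) * (1-q)^d) := by
        rw [hLdef]; ring
      rw [this]
      linarith
  have hD : (0:ℝ) < 1 - ((d:ℝ)^2*q-1) * L := by linarith
  have hFL : L/(1+L)*(1+L) = L := div_mul_cancel₀ _ h1L.ne'
  have h2 : Φ * (1+L) ≤ (1 + d*(L/(1+L) + d*q*(L/(1+L))*Φ)) * (1+L) :=
    mul_le_mul_of_nonneg_right hself h1L.le
  have expand : (1 + d*(L/(1+L) + d*q*(L/(1+L))*Φ)) * (1+L)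
      = (1+L) + d*L + d*(d*q*L*Φ) := by
    field_simp
    ring
  rw [expand] at h2
  have goal_eq : Φ * (1 - ((d:ℝ)^2*q-1) * L) = Φ*(1+L) - d*(d*q*L*Φ) := by ring
  have hmain : Φ * (1 - ((d:ℝ)^2*q-1) * L) ≤ 1 + ((d:ℝ)+1) * L := by
    rw [goal_eq]; linarith
  have hrw : (1 + ((d:ℝ) + 1) * lam * (1-q)^d) / (1 - ((d:ℝ)^2 * q - 1) * lam * (1-q)^d)
      = (1 + ((d:ℝ)+1) * L) / (1 - ((d:ℝ)^2*q-1) * L) := by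
    rw [hLdef]; ring_nf
  rw [hrw, le_div_iff₀ hD]
  exact hmain
end

section
/- Let d ≥ 2, λ ≤ d^d/(d-1)^{d+1}, and let F(x) = λ(1-x)^d/(1+λ(1-x)^d). Then the iterates F^{(t)}(0) converge as t → ∞ to the unique fixed point x̂ of F in [0,1]. -/
open Finset Filter


lemma S_sq (τ : ℝ) (hτ : 0 < τ) (k : ℕ) :
    (k:ℝ)^2 * τ^(k-1) ≤ (∑ i ∈ range k, τ^i)^2 := by
  have key := Finset.sum_mul_sq_le_sq_mul_sq (range k)
    (fun i => Real.sqrt (τ^i)) (fun i => Real.sqrt (τ^(k-1-i)))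
  have h1 : ∀ i ∈ range k, Real.sqrt (τ^i) * Real.sqrt (τ^(k-1-i)) = Real.sqrt (τ^(k-1)) := by
    intro i hi
    rw [← Real.sqrt_mul (by positivity), ← pow_add]
    congr 2
    simp at hi; omega
  rw [Finset.sum_congr rfl h1, Finset.sum_const, card_range, nsmul_eq_mul] at key
  have h2 : ∀ i ∈ range k, Real.sqrt (τ^i) ^ 2 = τ ^ i := fun i _ => Real.sq_sqrt (by positivity)
  have h3 : ∀ i ∈ range k, Real.sqrt (τ^(k-1-i)) ^ 2 = τ ^ (k-1-i) :=
    fun i _ => Real.sq_sqrt (by positivity)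
  rw [Finset.sum_congr rfl h2, Finset.sum_congr rfl h3] at key
  have h4 : ∑ i ∈ range k, τ ^ (k-1-i) = ∑ i ∈ range k, τ ^ i := by
    exact Finset.sum_range_reflect (fun i => τ^i) k
  rw [h4, ← sq] at key
  calc (k:ℝ)^2 * τ^(k-1) = ((k:ℝ) * Real.sqrt (τ^(k-1)))^2 := by
        rw [mul_pow, Real.sq_sqrt (by positivity)]
    _ ≤ _ := key

lemma S_prod (τ : ℝ) (hτ : τ ≠ 1) (e : ℕ) :
    (∑ i ∈ range (e+2), τ^i) * (∑ i ∈ range e, τ^i)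
      = (∑ i ∈ range (e+1), τ^i)^2 - τ^e := by
  have h1 : τ - 1 ≠ 0 := sub_ne_zero.2 hτ
  apply mul_right_cancel₀ (pow_ne_zero 2 h1)
  have hA := geom_sum_mul τ (e+2)
  have hB := geom_sum_mul τ e
  have hC := geom_sum_mul τ (e+1)
  calc (∑ i ∈ range (e+2), τ^i) * (∑ i ∈ range e, τ^i) * (τ-1)^2
      = ((∑ i ∈ range (e+2), τ^i) * (τ-1)) * ((∑ i ∈ range e, τ^i) * (τ-1)) := by ring
    _ = (τ^(e+2) - 1) * (τ^e - 1) := by rw [hA, hB]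
    _ = (τ^(e+1) - 1)^2 - τ^e * (τ-1)^2 := by ring
    _ = ((∑ i ∈ range (e+1), τ^i) * (τ-1))^2 - τ^e * (τ-1)^2 := by rw [hC]
    _ = _ := by ring


lemma keyS (d : ℕ) (hd : 2 ≤ d) (τ : ℝ) (hτ : 1 < τ) :
    (d:ℝ)^d * τ * (∑ i ∈ range (d-1), τ^i)^(d+1)
      < ((d:ℝ)-1)^(d+1) * (∑ i ∈ range d, τ^i)^d := by
  have hτ0 : (0:ℝ) < τ := lt_trans one_pos hτ
  induction d, hd using Nat.le_induction with
  | base =>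
      norm_num
      nlinarith [sq_nonneg (τ - 1)]
  | succ d hd IH =>
      have IH := IH
      set A : ℝ := ∑ i ∈ range (d-1), τ^i with hA
      set B : ℝ := ∑ i ∈ range d, τ^i with hB
      set C : ℝ := ∑ i ∈ range (d+1), τ^i with hC
      have hApos : 0 < A := by
        apply Finset.sum_pos (fun i _ => pow_pos hτ0 i)
        exact nonempty_range_iff.2 (by omega)
      have hBpos : 0 < B := by
        apply Finset.sum_pos (fun i _ => pow_pos hτ0 i)
        exact nonempty_range_iff.2 (by omega)
      have hCpos : 0 < C := by
        apply Finset.sum_pos (fun i _ => pow_pos hτ0 i)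
        exact nonempty_range_iff.2 (by omega)
      have hd1 : (1:ℝ) ≤ (d:ℝ) - 1 := by
        have : (2:ℝ) ≤ (d:ℝ) := by exact_mod_cast hd
        linarith
      -- log-convexity: ((d:ℝ)^2 - 1) * B^2 ≤ (d:ℝ)^2 * (C * A)
      have hprod : C * A = B^2 - τ^(d-1) := by
        have := S_prod τ (ne_of_gt hτ) (d-1)
        have e1 : d - 1 + 2 = d + 1 := by omega
        have e2 : d - 1 + 1 = d := by omega
        rw [e1, e2] at this
        exact this
      have hsq := S_sq τ hτ0 d
      have hlc : ((d:ℝ)^2 - 1) * B^2 ≤ (d:ℝ)^2 * (C * A) := by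
        rw [hprod]
        nlinarith [hsq]
      -- raise to the (d+1)
      have hd2 : (2:ℝ) ≤ (d:ℝ) := by exact_mod_cast hd
      have hlc2 : (((d:ℝ)^2 - 1) * B^2)^(d+1) ≤ ((d:ℝ)^2 * (C * A))^(d+1) := by
        apply pow_le_pow_left₀ (mul_nonneg (by nlinarith) (sq_nonneg B)) hlc
      -- goal after simplification
      have e3 : d + 1 - 1 = d := by omega
      rw [e3]
      push_cast
      -- goal: (d+1)^(d+1) * τ * B^(d+2) < d^(d+2) * C^(d+1)  (with ((d:ℝ)+1-1) = d)
      have e4 : (d:ℝ) + 1 - 1 = (d:ℝ) := by ring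
      rw [e4]
      -- cancel against P := ((d:ℝ)-1)^(d+1) * B^d
      have hP : 0 < ((d:ℝ)-1)^(d+1) * B^d := by positivity
      rw [← mul_lt_mul_iff_right₀ hP]
      calc ((d:ℝ)-1)^(d+1) * B^d * (((d:ℝ)+1)^(d+1) * τ * B^(d+2))
          = τ * ((((d:ℝ)^2-1) * B^2)^(d+1)) := by
            rw [show ((d:ℝ)^2-1)*B^2 = (((d:ℝ)-1)*((d:ℝ)+1))*B^2 by ring, mul_pow, mul_pow,
              ← pow_mul, show 2*(d+1) = d + (d+2) by ring, pow_add]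
            ring
        _ ≤ τ * (((d:ℝ)^2 * (C * A))^(d+1)) := by
            apply mul_le_mul_of_nonneg_left hlc2 (le_of_lt hτ0)
        _ = ((d:ℝ)^d * τ * A^(d+1)) * ((d:ℝ)^(d+2) * C^(d+1)) := by
            rw [mul_pow, mul_pow, ← pow_mul, show 2*(d+1) = d + (d+2) by ring, pow_add]
            ring
        _ < (((d:ℝ)-1)^(d+1) * B^d) * ((d:ℝ)^(d+2) * C^(d+1)) := by
            apply mul_lt_mul_of_pos_right IH (by positivity)


lemma keyPow (e : ℕ) (he : 1 ≤ e) (τ : ℝ) (hτ : 1 < τ) :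
    ((e:ℝ)+1)^(e+1) * τ * (τ^e - 1)^(e+2)
      < (e:ℝ)^(e+2) * ((τ-1) * (τ^(e+1)-1)^(e+1)) := by
  have h := keyS (e+1) (by omega) τ hτ
  simp only [Nat.add_sub_cancel] at h
  push_cast at h
  rw [add_sub_cancel_right] at h
  have hg1 : (∑ i ∈ range e, τ^i) * (τ-1) = τ^e - 1 := geom_sum_mul τ e
  have hg2 : (∑ i ∈ range (e+1), τ^i) * (τ-1) = τ^(e+1) - 1 := geom_sum_mul τ (e+1)
  have hτ1 : (0:ℝ) < τ - 1 := by linarith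
  calc ((e:ℝ)+1)^(e+1) * τ * (τ^e - 1)^(e+2)
      = (((e:ℝ)+1)^(e+1) * τ * (∑ i ∈ range e, τ^i)^(e+2)) * (τ-1)^(e+2) := by
        rw [← hg1, mul_pow]; ring
    _ < ((e:ℝ)^(e+2) * (∑ i ∈ range (e+1), τ^i)^(e+1)) * (τ-1)^(e+2) := by
        exact mul_lt_mul_of_pos_right h (by positivity)
    _ = (e:ℝ)^(e+2) * ((τ-1) * (τ^(e+1)-1)^(e+1)) := by
        rw [← hg2, mul_pow]; ring

lemma rigid (d : ℕ) (hd : 2 ≤ d) (lam : ℝ) (hlam : 0 < lam)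
    (hle : lam ≤ (d:ℝ)^d / ((d:ℝ) - 1)^(d+1))
    (a b : ℝ) (hb : 0 < b) (hba : b < a)
    (h1 : a * (1+b)^d = lam) (h2 : b * (1+a)^d = lam) : False := by
  obtain ⟨e, rfl⟩ : ∃ e, d = e + 1 := ⟨d - 1, by omega⟩
  have he : 1 ≤ e := by omega
  have hb1 : (0:ℝ) < 1 + b := by linarith
  have ha1 : (0:ℝ) < 1 + a := by linarith
  set τ : ℝ := (1+a)/(1+b) with hτdef
  have hτ : 1 < τ := (one_lt_div hb1).2 (by linarith)
  have hτa : 1 + a = τ * (1+b) := by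
    rw [hτdef, div_mul_cancel₀ (1+a) (ne_of_gt hb1)]
  have hab : a = b * τ^(e+1) := by
    have h2' : (b * τ^(e+1)) * (1+b)^(e+1) = lam := by
      rw [← h2, hτa, mul_pow]; ring
    have := h1.trans h2'.symm
    exact mul_right_cancel₀ (pow_ne_zero _ (ne_of_gt hb1)) this
  have hbtau : b * (τ^(e+1) - τ) = τ - 1 := by
    have : a = τ * (1+b) - 1 := by linarith [hτa]
    rw [this] at hab
    linear_combination -hab
  -- substitutions
  have hsub2 : τ - 1 = b * τ * (τ^e - 1) := by
    rw [← hbtau, pow_succ']; ring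
  have hsub1 : τ^(e+1) - 1 = (1+b) * τ * (τ^e - 1) := by
    have : τ^(e+1) - 1 = (τ^(e+1) - τ) + (τ - 1) := by ring
    rw [this, ← hbtau, pow_succ']; ring
  have hlameq : lam = b * τ^(e+1) * (1+b)^(e+1) := by
    rw [← h2, hτa, mul_pow]; ring
  have hkey := keyPow e he τ hτ
  have hRHS : ((e:ℝ))^(e+2) * ((τ-1) * (τ^(e+1)-1)^(e+1))
      = ((e:ℝ))^(e+2) * lam * (τ * (τ^e - 1)^(e+2)) := by
    rw [hsub2, hsub1, hlameq, mul_pow, mul_pow, pow_succ']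
    ring
  rw [hRHS] at hkey
  have hX : 0 < τ * (τ^e - 1)^(e+2) := by
    have h' : 1 < τ^e := one_lt_pow₀ hτ (by omega)
    exact mul_pos (by linarith) (pow_pos (by linarith) _)
  -- cancel X
  have hfin : ((e:ℝ)+1)^(e+1) < (e:ℝ)^(e+2) * lam := by
    have := (mul_lt_mul_iff_left₀ hX).1 (by
      calc ((e:ℝ)+1)^(e+1) * (τ * (τ^e - 1)^(e+2))
          ≤ ((e:ℝ)+1)^(e+1) * τ * (τ^e - 1)^(e+2) := by rw [mul_assoc]
        _ < ((e:ℝ))^(e+2) * lam * (τ * (τ^e - 1)^(e+2)) := hkey)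
    exact this
  -- contradiction with hle
  have hcast : ((e+1:ℕ):ℝ) = (e:ℝ) + 1 := by push_cast; ring
  rw [hcast, add_sub_cancel_right] at hle
  have hepos : (0:ℝ) < (e:ℝ)^(e+2) := by
    have : (1:ℝ) ≤ (e:ℝ) := by exact_mod_cast he
    positivity
  have : lam * (e:ℝ)^(e+2) ≤ ((e:ℝ)+1)^(e+1) := by
    rw [div_eq_mul_inv] at hle
    calc lam * (e:ℝ)^(e+2) ≤ (((e:ℝ)+1)^(e+1) * ((e:ℝ)^(e+2))⁻¹) * (e:ℝ)^(e+2) := by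
          apply mul_le_mul_of_nonneg_right hle (le_of_lt hepos)
      _ = ((e:ℝ)+1)^(e+1) := by field_simp
  nlinarith [hfin]



section dyn
variable {d : ℕ} {lam : ℝ}

private lemma den_pos (hlam : 0 < lam) {x : ℝ} (h1 : x ≤ 1) :
    0 < 1 + lam * (1-x)^d := by
  have h : (0:ℝ) ≤ 1 - x := by linarith
  positivity

private lemma F_nonneg (hlam : 0 < lam) {x : ℝ} (h1 : x ≤ 1) :
    0 ≤ lam * (1-x)^d / (1 + lam * (1-x)^d) := by
  have h : (0:ℝ) ≤ 1 - x := by linarith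
  have := den_pos (d := d) hlam h1
  positivity

private lemma F_lt_one (hlam : 0 < lam) {x : ℝ} (h1 : x ≤ 1) :
    lam * (1-x)^d / (1 + lam * (1-x)^d) < 1 := by
  rw [div_lt_one (den_pos hlam h1)]
  linarith

private lemma F_anti (hlam : 0 < lam) {x y : ℝ} (hx0 : 0 ≤ x) (hy1 : y ≤ 1) (hxy : x ≤ y) :
    lam * (1-y)^d / (1 + lam * (1-y)^d) ≤ lam * (1-x)^d / (1 + lam * (1-x)^d) := by
  rw [div_le_div_iff₀ (den_pos hlam hy1) (den_pos hlam (by linarith : x ≤ 1))]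
  have hpow : (1-y)^d ≤ (1-x)^d := pow_le_pow_left₀ (by linarith) (by linarith) d
  nlinarith [hpow, hlam.le, pow_nonneg (by linarith : (0:ℝ) ≤ 1-y) d]

end dyn

/-- For `λ ≤ λ_c(d+1)`, the iterates `F^{(t)}(0)` of
`F(x) = λ(1-x)^d/(1+λ(1-x)^d)` converge to the unique fixed point `xh` of `F`
in `[0,1]`. -/
theorem stmt17 (d : ℕ) (hd : 2 ≤ d) (lam : ℝ) (hlam : 0 < lam)
    (hle : lam ≤ (d:ℝ)^d / ((d:ℝ) - 1)^(d+1)) (xh : ℝ) (hx : xh ∈ Set.Icc (0:ℝ) 1)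
    (hfix : lam * (1 - xh)^d / (1 + lam * (1 - xh)^d) = xh)
    (huniq : ∀ y ∈ Set.Icc (0:ℝ) 1,
      lam * (1 - y)^d / (1 + lam * (1 - y)^d) = y → y = xh) :
    Filter.Tendsto
      (fun t : ℕ => (fun x : ℝ => lam * (1 - x)^d / (1 + lam * (1 - x)^d))^[t] 0)
      Filter.atTop (nhds xh) := by
  obtain ⟨hxh0, hxh1⟩ := hx
  set f : ℝ → ℝ := fun x : ℝ => lam * (1 - x)^d / (1 + lam * (1 - x)^d) with hf
  set x : ℕ → ℝ := fun t : ℕ => f^[t] 0 with hxdef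
  have hxsucc : ∀ t, x (t+1) = f (x t) := fun t => Function.iterate_succ_apply' f t 0
  have hx0 : x 0 = 0 := rfl
  -- membership
  have hmem : ∀ t, 0 ≤ x t ∧ x t ≤ 1 := by
    intro t
    induction t with
    | zero => rw [hx0]; norm_num
    | succ t ih =>
        rw [hxsucc]
        exact ⟨F_nonneg hlam ih.2, le_of_lt (F_lt_one hlam ih.2)⟩
  set e : ℕ → ℝ := fun t => x (2*t) with he
  set o : ℕ → ℝ := fun t => x (2*t+1) with ho
  have hoe : ∀ t, o t = f (e t) := fun t => hxsucc (2*t)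
  have heo : ∀ t, e (t+1) = f (o t) := by
    intro t
    have h1 : 2*(t+1) = (2*t+1)+1 := by ring
    show x (2*(t+1)) = f (x (2*t+1))
    rw [h1, hxsucc]
  -- bounds relative to xh
  have hbound : ∀ t, e t ≤ xh ∧ xh ≤ o t := by
    intro t
    induction t with
    | zero =>
        constructor
        · show x 0 ≤ xh; rw [hx0]; exact hxh0
        · rw [hoe]
          calc xh = f xh := hfix.symm
            _ ≤ f (e 0) := F_anti hlam (hmem 0).1 hxh1 (by rw [show e 0 = x 0 from rfl, hx0]; exact hxh0)
    | succ t ih =>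
        have h1 : e (t+1) ≤ xh := by
          rw [heo]
          calc f (o t) ≤ f xh := F_anti hlam hxh0 (hmem (2*t+1)).2 ih.2
            _ = xh := hfix
        refine ⟨h1, ?_⟩
        rw [hoe]
        calc xh = f xh := hfix.symm
          _ ≤ f (e (t+1)) := F_anti hlam (hmem (2*(t+1))).1 hxh1 h1
  -- even subsequence monotone
  have hmonostep : ∀ t, e t ≤ e (t+1) := by
    intro t
    induction t with
    | zero =>
        show x 0 ≤ e 1
        rw [hx0]
        exact (hmem 2).1
    | succ t ih =>
        have hoanti : o (t+1) ≤ o t := by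
          rw [hoe, hoe]
          exact F_anti hlam (hmem (2*t)).1 (hmem (2*(t+1))).2 ih
        rw [heo, heo]
        exact F_anti hlam (hmem (2*(t+1)+1)).1 (hmem (2*t+1)).2 hoanti
  have hmonoE : Monotone e := monotone_nat_of_le_succ hmonostep
  have hantiO : Antitone o := by
    apply antitone_nat_of_succ_le
    intro t
    rw [hoe, hoe]
    exact F_anti hlam (hmem (2*t)).1 (hmem (2*(t+1))).2 (hmonostep t)
  -- limits
  have hbddE : BddAbove (Set.range e) := ⟨1, by rintro _ ⟨t, rfl⟩; exact (hmem (2*t)).2⟩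
  have hbddO : BddBelow (Set.range o) := ⟨0, by rintro _ ⟨t, rfl⟩; exact (hmem (2*t+1)).1⟩
  set L : ℝ := ⨆ t, e t with hL
  set M : ℝ := ⨅ t, o t with hM
  have hLt : Tendsto e atTop (nhds L) := tendsto_atTop_ciSup hmonoE hbddE
  have hMt : Tendsto o atTop (nhds M) := tendsto_atTop_ciInf hantiO hbddO
  have hLxh : L ≤ xh := ciSup_le fun t => (hbound t).1
  have hxhM : xh ≤ M := le_ciInf fun t => (hbound t).2
  have hL0 : 0 ≤ L := by
    have := le_ciSup hbddE 0
    calc (0:ℝ) = e 0 := hx0.symm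
      _ ≤ L := le_ciSup hbddE 0
  have hM1 : M < 1 := by
    have h1 : M ≤ o 0 := ciInf_le hbddO 0
    have h2 : o 0 < 1 := by rw [hoe]; exact F_lt_one hlam (hmem 0).2
    linarith
  have hL1 : L ≤ 1 := by linarith
  have hM0 : 0 ≤ M := by linarith
  -- continuity
  have hcont : ∀ z : ℝ, z ≤ 1 → ContinuousAt f z := by
    intro z hz
    apply ContinuousAt.div
    · fun_prop
    · fun_prop
    · exact ne_of_gt (den_pos hlam hz)
  have hfLM : f L = M := by
    apply tendsto_nhds_unique ((hcont L hL1).tendsto.comp hLt)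
    have : (f ∘ e) = o := by funext t; exact (hoe t).symm
    rw [this]; exact hMt
  have hfML : f M = L := by
    apply tendsto_nhds_unique ((hcont M (le_of_lt hM1)).tendsto.comp hMt)
    have : (f ∘ o) = fun t => e (t+1) := by funext t; exact (heo t).symm
    rw [this]
    exact hLt.comp (tendsto_add_atTop_nat 1)
  -- rigidity: L = M
  have hLM : L = M := by
    by_contra hne
    have hLltM : L < M := lt_of_le_of_ne (le_trans hLxh hxhM) hne
    set a : ℝ := lam * (1-L)^d with ha
    set b : ℝ := lam * (1-M)^d with hb
    have hbpos : 0 < b := by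
      have : (0:ℝ) < 1 - M := by linarith
      positivity
    have hba : b < a := by
      apply mul_lt_mul_of_pos_left _ hlam
      exact pow_lt_pow_left₀ (by linarith) (by linarith) (by omega)
    -- L = b/(1+b), M = a/(1+a)
    have hLb : L * (1+b) = b := by
      have := hfML
      rw [hf] at this
      simp only [] at this
      rw [div_eq_iff (ne_of_gt (den_pos hlam (le_of_lt hM1)))] at this
      rw [hb]; linarith [this]
    have hMa : M * (1+a) = a := by
      have := hfLM
      rw [hf] at this
      simp only [] at this
      rw [div_eq_iff (ne_of_gt (den_pos hlam hL1))] at this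
      rw [ha]; linarith [this]
    have h1L : (1-L) * (1+b) = 1 := by nlinarith [hLb]
    have h1M : (1-M) * (1+a) = 1 := by nlinarith [hMa]
    have heq1 : a * (1+b)^d = lam := by
      calc a * (1+b)^d = lam * ((1-L)*(1+b))^d := by rw [mul_pow]; ring
        _ = lam := by rw [h1L, one_pow, mul_one]
    have heq2 : b * (1+a)^d = lam := by
      calc b * (1+a)^d = lam * ((1-M)*(1+a))^d := by rw [mul_pow]; ring
        _ = lam := by rw [h1M, one_pow, mul_one]
    exact rigid d hd lam hlam hle a b hbpos hba heq1 heq2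
  have hLeq : L = xh := le_antisymm hLxh (hLM ▸ hxhM)
  -- squeeze
  have hdiv : Tendsto (fun n : ℕ => n / 2) atTop atTop :=
    tendsto_atTop_atTop.2 fun b => ⟨2*b, fun a ha => by omega⟩
  have hgt : Tendsto (fun n : ℕ => e (n/2)) atTop (nhds xh) := by
    rw [← hLeq]; exact hLt.comp hdiv
  have hht : Tendsto (fun n : ℕ => o (n/2)) atTop (nhds xh) := by
    have : M = xh := by rw [← hLM, hLeq]
    rw [← this]; exact hMt.comp hdiv
  apply tendsto_of_tendsto_of_tendsto_of_le_of_le hgt hht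
  · intro n
    rcases Nat.even_or_odd n with ⟨t, ht⟩ | ⟨t, ht⟩
    · subst ht
      show e ((t+t)/2) ≤ x (t+t)
      rw [show (t+t)/2 = t by omega, show t+t = 2*t by ring]
    · subst ht
      show e ((2*t+1)/2) ≤ x (2*t+1)
      rw [show (2*t+1)/2 = t by omega]
      exact le_trans (hbound t).1 (hbound t).2
  · intro n
    rcases Nat.even_or_odd n with ⟨t, ht⟩ | ⟨t, ht⟩
    · subst ht
      show x (t+t) ≤ o ((t+t)/2)
      rw [show (t+t)/2 = t by omega, show t+t = 2*t by ring]
      exact le_trans (hbound t).1 (hbound t).2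
    · subst ht
      show x (2*t+1) ≤ o ((2*t+1)/2)
      rw [show (2*t+1)/2 = t by omega]
end
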